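/- arXiv:0805.0544 — 4 statements merged into one kernel-verified Lean document; each statement's English description precedes it below -/
import Mathlib

section
/- Define A(ℓ) := π² (2θ(ℓ) − sin(2θ(ℓ)))/(1 − cos(2θ(ℓ))) for ℓ > 1, where θ(ℓ) ∈ (0, π) satisfies ℓ = θ(ℓ)/sin θ(ℓ). Then A'(ℓ) = 2π²/sin θ(ℓ); in particular A is strictly increasing and A'(ℓ) > 2π² for all ℓ ≠ π/2. -/
/-!
`θ` inverts `u ↦ u / sin u`, a strictly increasing map of `(0, π)` onto `(1, ∞)` with derivative
`(sin u - u cos u) / sin² u > 0`, so `θ` is differentiable with `θ' = sin² θ / (sin θ - θ cos θ)`.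
Since `1 - cos 2u = 2 sin² u`, the area is `π² (θ - sin θ cos θ) / sin² θ`, whose `θ`-derivative is
`2π² (sin θ - θ cos θ) / sin³ θ`. The factor `sin θ - θ cos θ` cancels in the chain rule, leaving
`A' = 2π² / sin θ`, which exceeds `2π²` unless `θ = π/2`.
-/

open Real Set Filter Topology

theorem MonotoneOn.strictMonoOn_of_leftInvOn {α β : Type*} [Preorder α] [LinearOrder β]
    {f : β → α} {g : α → β} {s : Set α} {t : Set β} (hf : MonotoneOn f t)
    (hg : MapsTo g s t) (hinv : LeftInvOn f g s) : StrictMonoOn g s := by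
  intro a ha b hb hab
  by_contra! hba
  have := hf (hg hb) (hg ha) hba
  rw [hinv ha, hinv hb] at this
  exact hab.not_ge this

theorem HasDerivAt.of_leftInvOn {f g : ℝ → ℝ} {s t : Set ℝ} (hs : IsOpen s) (ht : IsOpen t)
    (hf : StrictMonoOn f t) (hft : MapsTo f t s) (hg : MapsTo g s t) (hinv : LeftInvOn f g s)
    {x f' : ℝ} (hx : x ∈ s) (hf' : HasDerivAt f f' (g x)) (hf'0 : f' ≠ 0) :
    HasDerivAt g f'⁻¹ x := by
  have hsurj : SurjOn g s t :=
    (hf.injOn.rightInvOn_of_leftInvOn hinv hft hg).surjOn hft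
  have hcont : ContinuousAt g x :=
    (hf.monotoneOn.strictMonoOn_of_leftInvOn hg hinv).continuousAt_of_image_mem_nhds
      (hs.mem_nhds hx) (mem_of_superset (ht.mem_nhds (hg hx)) hsurj)
  exact hf'.of_local_left_inverse hcont hf'0 (eventually_of_mem (hs.mem_nhds hx) hinv)

theorem sin_sub_mul_cos_pos {t : ℝ} (h0 : 0 < t) (hπ : t < π) : 0 < sin t - t * cos t := by
  rcases lt_or_ge t (π / 2) with h | h
  · have hc : 0 < cos t := cos_pos_of_mem_Ioo ⟨by linarith [pi_pos], h⟩
    have := lt_tan h0 h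
    rw [tan_eq_sin_div_cos, lt_div_iff₀ hc] at this
    linarith
  · have hs : 0 < sin t := sin_pos_of_pos_of_lt_pi h0 hπ
    have hc : cos t ≤ 0 := cos_nonpos_of_pi_div_two_le_of_le h (by linarith [pi_pos])
    nlinarith

theorem sin_lt_one_of_mem_Ioo_of_ne {t : ℝ} (ht : t ∈ Ioo 0 π) (hne : t ≠ π / 2) :
    sin t < 1 := by
  refine (sin_le_one t).lt_of_ne fun h ↦ hne ?_
  have hc : cos t = 0 := by nlinarith [sin_sq_add_cos_sq t]
  refine injOn_cos (Ioo_subset_Icc_self ht) ⟨by positivity, by linarith [pi_pos]⟩ ?_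
  rw [hc, cos_pi_div_two]

theorem hasDerivAt_id_div_sin {t : ℝ} (ht : sin t ≠ 0) :
    HasDerivAt (fun u ↦ u / sin u) ((sin t - t * cos t) / sin t ^ 2) t :=
  ((hasDerivAt_id' t).fun_div (hasDerivAt_sin t) ht).congr_deriv (by ring)

theorem strictMonoOn_id_div_sin : StrictMonoOn (fun u ↦ u / sin u) (Ioo 0 π) := by
  have hderiv : ∀ t ∈ Ioo 0 π,
      HasDerivAt (fun u ↦ u / sin u) ((sin t - t * cos t) / sin t ^ 2) t :=
    fun t ht ↦ hasDerivAt_id_div_sin (sin_pos_of_pos_of_lt_pi ht.1 ht.2).ne'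
  refine strictMonoOn_of_deriv_pos (convex_Ioo 0 π)
    (fun t ht ↦ (hderiv t ht).continuousAt.continuousWithinAt) fun t ht ↦ ?_
  rw [interior_Ioo] at ht
  rw [(hderiv t ht).deriv]
  exact div_pos (sin_sub_mul_cos_pos ht.1 ht.2) (pow_pos (sin_pos_of_pos_of_lt_pi ht.1 ht.2) 2)

theorem mapsTo_id_div_sin : MapsTo (fun u ↦ u / sin u) (Ioo 0 π) (Ioi 1) := by
  intro t ⟨h0, hπ⟩
  rw [mem_Ioi, one_lt_div (sin_pos_of_pos_of_lt_pi h0 hπ)]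
  exact sin_lt h0

theorem two_mul_sub_sin_two_mul_div (u : ℝ) :
    (2 * u - sin (2 * u)) / (1 - cos (2 * u)) = (u - sin u * cos u) / sin u ^ 2 := by
  rw [sin_two_mul, cos_two_mul, cos_sq',
    show 1 - (2 * (1 - sin u ^ 2) - 1) = sin u ^ 2 * 2 by ring, ← div_div, sub_div]
  ring

theorem hasDerivAt_two_mul_sub_sin_two_mul_div {t : ℝ} (ht : sin t ≠ 0) :
    HasDerivAt (fun u ↦ (2 * u - sin (2 * u)) / (1 - cos (2 * u)))
      (2 * (sin t - t * cos t) / sin t ^ 3) t := by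
  simp only [two_mul_sub_sin_two_mul_div]
  have hnum : HasDerivAt (fun u ↦ u - sin u * cos u) (2 * sin t ^ 2) t :=
    ((hasDerivAt_id' t).fun_sub ((hasDerivAt_sin t).fun_mul (hasDerivAt_cos t))).congr_deriv
      (by linear_combination -sin_sq_add_cos_sq t)
  refine (hnum.fun_div ((hasDerivAt_sin t).fun_pow 2) (pow_ne_zero 2 ht)).congr_deriv ?_
  field_simp
  linear_combination (2 * sin t ^ 2) * sin_sq_add_cos_sq t

theorem hasDerivAt_of_leftInvOn_id_div_sin {θ : ℝ → ℝ} (hmem : MapsTo θ (Ioi 1) (Ioo 0 π))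
    (hinv : LeftInvOn (fun u ↦ u / sin u) θ (Ioi 1)) {ℓ : ℝ} (hℓ : ℓ ∈ Ioi 1) :
    HasDerivAt θ (sin (θ ℓ) ^ 2 / (sin (θ ℓ) - θ ℓ * cos (θ ℓ))) ℓ := by
  obtain ⟨h0, hπ⟩ := hmem hℓ
  have hsin : 0 < sin (θ ℓ) := sin_pos_of_pos_of_lt_pi h0 hπ
  simpa using (hasDerivAt_id_div_sin hsin.ne').of_leftInvOn isOpen_Ioi isOpen_Ioo
    strictMonoOn_id_div_sin mapsTo_id_div_sin hmem hinv hℓ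
    (div_pos (sin_sub_mul_cos_pos h0 hπ) (pow_pos hsin 2)).ne'

theorem A_deriv_and_strictMono (θ A : ℝ → ℝ)
    (hmem : ∀ ℓ ∈ Set.Ioi (1:ℝ), θ ℓ ∈ Set.Ioo 0 π)
    (heq : ∀ ℓ ∈ Set.Ioi (1:ℝ), ℓ = θ ℓ / Real.sin (θ ℓ))
    (hA : ∀ ℓ ∈ Set.Ioi (1:ℝ),
      A ℓ = π ^ 2 * (2 * θ ℓ - Real.sin (2 * θ ℓ)) / (1 - Real.cos (2 * θ ℓ))) :
    (∀ ℓ ∈ Set.Ioi (1:ℝ), HasDerivAt A (2 * π ^ 2 / Real.sin (θ ℓ)) ℓ) ∧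
    StrictMonoOn A (Set.Ioi 1) ∧
    (∀ ℓ ∈ Set.Ioi (1:ℝ), ℓ ≠ π / 2 → 2 * π ^ 2 < 2 * π ^ 2 / Real.sin (θ ℓ)) := by
  have hsin (ℓ : ℝ) (hℓ : ℓ ∈ Ioi 1) : 0 < sin (θ ℓ) :=
    sin_pos_of_pos_of_lt_pi (hmem ℓ hℓ).1 (hmem ℓ hℓ).2
  have hderiv (ℓ : ℝ) (hℓ : ℓ ∈ Ioi 1) : HasDerivAt A (2 * π ^ 2 / sin (θ ℓ)) ℓ := by
    have hθ := hasDerivAt_of_leftInvOn_id_div_sin hmem (fun ℓ hℓ ↦ (heq ℓ hℓ).symm) hℓ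
    have hAθ : A =ᶠ[𝓝 ℓ] fun x ↦ π ^ 2 * ((2 * θ x - sin (2 * θ x)) / (1 - cos (2 * θ x))) :=
      eventually_of_mem (isOpen_Ioi.mem_nhds hℓ) fun x hx ↦ (hA x hx).trans (mul_div_assoc ..)
    refine ((((hasDerivAt_two_mul_sub_sin_two_mul_div (hsin ℓ hℓ).ne').comp ℓ hθ).const_mul
      (π ^ 2)).congr_of_eventuallyEq hAθ).congr_deriv ?_
    have := (sin_sub_mul_cos_pos (hmem ℓ hℓ).1 (hmem ℓ hℓ).2).ne'
    field_simp
  refine ⟨hderiv, ?_, fun ℓ hℓ hne ↦ ?_⟩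
  · refine strictMonoOn_of_deriv_pos (convex_Ioi 1)
      (fun ℓ hℓ ↦ (hderiv ℓ hℓ).continuousAt.continuousWithinAt) fun ℓ hℓ ↦ ?_
    rw [interior_Ioi] at hℓ
    rw [(hderiv ℓ hℓ).deriv]
    exact div_pos (by positivity) (hsin ℓ hℓ)
  · have hθ : θ ℓ ≠ π / 2 := fun h ↦ hne (by rw [heq ℓ hℓ, h, sin_pi_div_two, div_one])
    exact (lt_div_iff₀ (hsin ℓ hℓ)).2
      (mul_lt_of_lt_one_right (by positivity) (sin_lt_one_of_mem_Ioo_of_ne (hmem ℓ hℓ) hθ))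
end

section
/- With A(ℓ) as above, lim_{ℓ→1⁺} A(ℓ)/√(ℓ−1) = 2√(2/3) π² and lim_{ℓ→∞} A(ℓ)/ℓ² = π. -/
/-!
Put `t = θ ℓ`. Since `1 - cos 2t = 2 sin² t` and `ℓ = t / sin t`, both quotients are explicit
functions of `t`, and `θ`, the inverse of the increasing map `t ↦ t / sin t` on `(0, π)`, tends to
`0⁺` as `ℓ → 1⁺` and to `π⁻` as `ℓ → ∞`. Near `π`, `A / ℓ² = π² (2t - sin 2t) / (2t²)` is continuous
with value `π`. Near `0`, `t - sin t = t³/6 + O(t⁵)` gives `A ~ (2π²/3) t` and `ℓ - 1 ~ t²/6`.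
-/

open Real Set Filter Topology

namespace Real

lemma sin_sub_mul_cos_pos {t : ℝ} (h0 : 0 < t) (hπ : t < π) : 0 < sin t - t * cos t := by
  rcases lt_or_ge t (π / 2) with ht | ht
  · have hcos : 0 < cos t := cos_pos_of_mem_Ioo ⟨by linarith, ht⟩
    have htan := lt_tan h0 ht
    rw [tan_eq_sin_div_cos, lt_div_iff₀ hcos] at htan
    linarith
  · have hcos : cos t ≤ 0 := cos_nonpos_of_pi_div_two_le_of_le ht (by linarith)
    nlinarith [sin_pos_of_pos_of_lt_pi h0 hπ]

lemma strictMonoOn_div_sin : StrictMonoOn (fun t => t / sin t) (Ioo 0 π) := by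
  have hsin : ∀ t ∈ Ioo 0 π, sin t ≠ 0 := fun t ht => (sin_pos_of_pos_of_lt_pi ht.1 ht.2).ne'
  refine strictMonoOn_of_deriv_pos (convex_Ioo 0 π)
    (continuousOn_id.div continuous_sin.continuousOn hsin) fun t ht => ?_
  rw [interior_Ioo] at ht
  have hderiv : HasDerivAt (fun t => t / sin t) ((1 * sin t - t * cos t) / sin t ^ 2) t :=
    (hasDerivAt_id' t).div (hasDerivAt_sin t) (hsin t ht)
  rw [hderiv.deriv, one_mul]
  exact div_pos (sin_sub_mul_cos_pos ht.1 ht.2) (pow_pos (sin_pos_of_pos_of_lt_pi ht.1 ht.2) 2)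

lemma one_lt_div_sin {t : ℝ} (h0 : 0 < t) (hπ : t < π) : 1 < t / sin t :=
  (one_lt_div (sin_pos_of_pos_of_lt_pi h0 hπ)).2 (sin_lt h0)

lemma one_sub_cos_two_mul (t : ℝ) : 1 - cos (2 * t) = 2 * sin t ^ 2 := by
  rw [sin_sq_eq_half_sub]; ring

lemma tendsto_sub_sin_div_pow_three :
    Tendsto (fun t => (t - sin t) / t ^ 3) (𝓝[≠] 0) (𝓝 (1 / 6)) := by
  have hbound : ∀ᶠ t in 𝓝[≠] (0 : ℝ), ‖(t - sin t) / t ^ 3 - 1 / 6‖ ≤ |t| ^ 2 / 100 := by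
    filter_upwards [nhdsWithin_le_nhds (Icc_mem_nhds neg_one_lt_zero one_pos),
      self_mem_nhdsWithin] with t ht (ht0 : t ≠ 0)
    have hsub : (t - sin t) / t ^ 3 - 1 / 6 = -(sin t - (t - t ^ 3 / 6)) / t ^ 3 := by
      field_simp
      ring
    rw [hsub, norm_div, norm_neg, norm_pow, Real.norm_eq_abs, Real.norm_eq_abs,
      div_le_iff₀ (by positivity)]
    calc |sin t - (t - t ^ 3 / 6)| ≤ |t| ^ 5 / 100 := sin_bound (abs_le.2 ht)
      _ = |t| ^ 2 / 100 * |t| ^ 3 := by ring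
  have hzero : Tendsto (fun t : ℝ => |t| ^ 2 / 100) (𝓝[≠] 0) (𝓝 0) :=
    ((continuous_abs.pow 2).div_const 100).tendsto' 0 0 (by simp) |>.mono_left nhdsWithin_le_nhds
  exact tendsto_sub_nhds_zero_iff.1 (squeeze_zero_norm' hbound hzero)

lemma tendsto_div_sin_nhdsNE_zero : Tendsto (fun t => t / sin t) (𝓝[≠] 0) (𝓝 1) := by
  have h := ((continuous_sinc.tendsto 0).mono_left nhdsWithin_le_nhds).inv₀
    (by rw [sinc_zero]; exact one_ne_zero) (l := 𝓝[≠] 0)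
  rw [sinc_zero, inv_one] at h
  refine h.congr' ?_
  filter_upwards [self_mem_nhdsWithin] with t ht
  rw [sinc_of_ne_zero ht, inv_div]

end Real

noncomputable def Aθ (t : ℝ) : ℝ := π ^ 2 * (2 * t - sin (2 * t)) / (1 - cos (2 * t))

lemma tendsto_Aθ_div_self : Tendsto (fun t => Aθ t / t) (𝓝[>] 0) (𝓝 (2 * π ^ 2 / 3)) := by
  have htwo : Tendsto (fun t : ℝ => 2 * t) (𝓝[>] 0) (𝓝[≠] 0) :=
    (tendsto_iff_comap.2 (comap_mulLeft_nhdsGT_zero two_pos).ge).mono_right (nhdsGT_le_nhdsNE 0)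
  have hlim := ((tendsto_sub_sin_div_pow_three.comp htwo).const_mul (4 * π ^ 2)).mul
    ((tendsto_div_sin_nhdsNE_zero.mono_left (nhdsGT_le_nhdsNE 0)).pow 2)
  rw [show 4 * π ^ 2 * (1 / 6) * 1 ^ 2 = 2 * π ^ 2 / 3 by ring] at hlim
  refine hlim.congr' ?_
  filter_upwards [Ioo_mem_nhdsGT pi_pos] with t ht
  have hsin := sin_pos_of_pos_of_lt_pi ht.1 ht.2
  simp only [Function.comp_apply, Aθ, one_sub_cos_two_mul]
  field_simp
  ring

lemma tendsto_div_sin_sub_one_div_sq :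
    Tendsto (fun t => (t / sin t - 1) / t ^ 2) (𝓝[>] 0) (𝓝 (1 / 6)) := by
  have hlim := (tendsto_sub_sin_div_pow_three.mul tendsto_div_sin_nhdsNE_zero).mono_left
    (nhdsGT_le_nhdsNE 0)
  rw [mul_one] at hlim
  refine hlim.congr' ?_
  filter_upwards [Ioo_mem_nhdsGT pi_pos] with t ht
  have hsin := sin_pos_of_pos_of_lt_pi ht.1 ht.2
  have ht0 := ht.1.ne'
  field_simp

lemma tendsto_Aθ_div_sqrt :
    Tendsto (fun t => Aθ t / √(t / sin t - 1)) (𝓝[>] 0) (𝓝 (2 * √(2 / 3) * π ^ 2)) := by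
  have hsqrt : √(2 / 3) * √(1 / 6) = 1 / 3 := by
    rw [← sqrt_mul (by norm_num), show (2 / 3 : ℝ) * (1 / 6) = (1 / 3) ^ 2 by norm_num,
      sqrt_sq (by norm_num)]
  have hne : √(1 / 6 : ℝ) ≠ 0 := by positivity
  have hlim := tendsto_Aθ_div_self.div
    ((continuous_sqrt.tendsto _).comp tendsto_div_sin_sub_one_div_sq) hne
  rw [show 2 * π ^ 2 / 3 / √(1 / 6) = 2 * √(2 / 3) * π ^ 2 by
    rw [div_eq_iff hne]; linear_combination (-2 * π ^ 2) * hsqrt] at hlim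
  refine hlim.congr' ?_
  filter_upwards [self_mem_nhdsWithin] with t (ht : 0 < t)
  rw [Pi.div_apply, Function.comp_apply, sqrt_div' _ (sq_nonneg t), sqrt_sq ht.le,
    div_div_div_cancel_right₀ ht.ne']

lemma tendsto_Aθ_div_sq : Tendsto (fun t => Aθ t / (t / sin t) ^ 2) (𝓝[<] π) (𝓝 π) := by
  have hcont : ContinuousAt (fun t => π ^ 2 * (2 * t - sin (2 * t)) / (2 * t ^ 2)) π :=
    ContinuousAt.div (by fun_prop) (by fun_prop) (by positivity)
  have hval : π ^ 2 * (2 * π - sin (2 * π)) / (2 * π ^ 2) = π := by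
    rw [sin_two_pi, sub_zero]
    field_simp
  have hlim := hcont.tendsto
  rw [hval] at hlim
  refine (hlim.mono_left nhdsWithin_le_nhds).congr' ?_
  filter_upwards [Ioo_mem_nhdsLT pi_pos] with t ht
  have hsin := sin_pos_of_pos_of_lt_pi ht.1 ht.2
  rw [Aθ, one_sub_cos_two_mul]
  field_simp

lemma tendsto_nhdsGT_one_of_eq_div_sin {θ : ℝ → ℝ}
    (hmem : ∀ ℓ ∈ Ioi (1 : ℝ), θ ℓ ∈ Ioo 0 π) (heq : ∀ ℓ ∈ Ioi (1 : ℝ), ℓ = θ ℓ / sin (θ ℓ)) :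
    Tendsto θ (𝓝[>] 1) (𝓝[>] 0) := by
  refine tendsto_nhdsWithin_iff.2 ⟨tendsto_order.2 ⟨fun a ha => ?_, fun b hb => ?_⟩, ?_⟩
  · filter_upwards [self_mem_nhdsWithin] with ℓ hℓ using ha.trans (hmem ℓ hℓ).1
  · set c := min b (π / 2)
    have hc : c ∈ Ioo 0 π :=
      ⟨lt_min hb (by positivity), (min_le_right _ _).trans_lt (by linarith [pi_pos])⟩
    filter_upwards [Ioo_mem_nhdsGT (one_lt_div_sin hc.1 hc.2), self_mem_nhdsWithin]
      with ℓ hℓc hℓ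
    have hθc : θ ℓ < c := by
      rw [← strictMonoOn_div_sin.lt_iff_lt (hmem ℓ hℓ) hc, ← heq ℓ hℓ]
      exact hℓc.2
    exact hθc.trans_le (min_le_left _ _)
  · filter_upwards [self_mem_nhdsWithin] with ℓ hℓ using (hmem ℓ hℓ).1

lemma tendsto_atTop_of_eq_div_sin {θ : ℝ → ℝ}
    (hmem : ∀ ℓ ∈ Ioi (1 : ℝ), θ ℓ ∈ Ioo 0 π) (heq : ∀ ℓ ∈ Ioi (1 : ℝ), ℓ = θ ℓ / sin (θ ℓ)) :
    Tendsto θ atTop (𝓝[<] π) := by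
  refine tendsto_nhdsWithin_iff.2 ⟨tendsto_order.2 ⟨fun a ha => ?_, fun b hb => ?_⟩, ?_⟩
  · set c := max a (π / 2)
    have hc : c ∈ Ioo 0 π :=
      ⟨(by positivity : 0 < π / 2).trans_le (le_max_right _ _), max_lt ha (by linarith [pi_pos])⟩
    filter_upwards [eventually_gt_atTop (c / sin c), eventually_gt_atTop 1] with ℓ hℓc hℓ
    have hcθ : c < θ ℓ := by
      rw [← strictMonoOn_div_sin.lt_iff_lt hc (hmem ℓ hℓ), ← heq ℓ hℓ]
      exact hℓc
    exact (le_max_left _ _).trans_lt hcθ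
  · filter_upwards [eventually_gt_atTop 1] with ℓ hℓ using (hmem ℓ hℓ).2.trans hb
  · filter_upwards [eventually_gt_atTop 1] with ℓ hℓ using (hmem ℓ hℓ).2

theorem A_asymptotics (θ A : ℝ → ℝ)
    (hmem : ∀ ℓ ∈ Set.Ioi (1:ℝ), θ ℓ ∈ Set.Ioo 0 π)
    (heq : ∀ ℓ ∈ Set.Ioi (1:ℝ), ℓ = θ ℓ / Real.sin (θ ℓ))
    (hA : ∀ ℓ ∈ Set.Ioi (1:ℝ),
      A ℓ = π ^ 2 * (2 * θ ℓ - Real.sin (2 * θ ℓ)) / (1 - Real.cos (2 * θ ℓ))) :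
    Filter.Tendsto (fun ℓ => A ℓ / Real.sqrt (ℓ - 1))
      (nhdsWithin 1 (Set.Ioi 1)) (nhds (2 * Real.sqrt (2 / 3) * π ^ 2)) ∧
    Filter.Tendsto (fun ℓ => A ℓ / ℓ ^ 2) Filter.atTop (nhds π) := by
  have hAθ : ∀ ℓ ∈ Ioi (1 : ℝ), A ℓ = Aθ (θ ℓ) := hA
  constructor
  · refine (tendsto_Aθ_div_sqrt.comp (tendsto_nhdsGT_one_of_eq_div_sin hmem heq)).congr' ?_
    filter_upwards [self_mem_nhdsWithin] with ℓ hℓ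
    rw [Function.comp_apply, ← heq ℓ hℓ, hAθ ℓ hℓ]
  · refine (tendsto_Aθ_div_sq.comp (tendsto_atTop_of_eq_div_sin hmem heq)).congr' ?_
    filter_upwards [eventually_gt_atTop 1] with ℓ hℓ
    rw [Function.comp_apply, ← heq ℓ hℓ, hAθ ℓ hℓ]
end

section
/- With A(ℓ) as above, A(ℓ) ≤ 2π ℓ² for all ℓ > 1, and the maximum of A(ℓ)/ℓ² is attained at ℓ = π/2 with value A(π/2)/(π/2)² = 2π. -/
/-!
With `ℓ = θ / sin θ` and `1 - cos 2θ = 2 sin² θ`, the bound `A(ℓ) ≤ 2πℓ²` becomes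
`π (x - sin x) ≤ x²` at `x = 2θ`. On `[0, π]` this is the parabolic lower bound
`x (π - x) ≤ π sin x`, which follows from `sin x ≥ x - x³/6` on `[0, π/2]` and the symmetry
`x ↦ π - x`; outside `[0, π]` it is a consequence of `|sin y| ≤ |y|`.
Equality holds at `θ = π/2`, the only solution of `π/2 = θ / sin θ` in `(0, π)` by Jordan's
inequality.
-/

open Real Set

namespace Real

lemma mul_pi_sub_le_pi_mul_sin_of_pi_mul_le {x : ℝ} (hx₀ : 0 ≤ x) (hx : π * x ≤ 6) :
    x * (π - x) ≤ π * sin x := by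
  have hsin := sin_ge_sub_cube hx₀
  nlinarith [mul_nonneg (sq_nonneg x) (sub_nonneg.2 hx), pi_pos]

lemma mul_pi_sub_le_pi_mul_sin {x : ℝ} (hx₀ : 0 ≤ x) (hx : x ≤ π) :
    x * (π - x) ≤ π * sin x := by
  have hπ : π * (π / 2) ≤ 6 := by nlinarith [pi_lt_d2, pi_pos]
  rcases le_total x (π / 2) with hle | hle
  · exact mul_pi_sub_le_pi_mul_sin_of_pi_mul_le hx₀ (by nlinarith [pi_pos])
  · have h := mul_pi_sub_le_pi_mul_sin_of_pi_mul_le (x := π - x) (by linarith)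
      (by nlinarith [pi_pos])
    rw [sin_pi_sub] at h
    linarith

lemma pi_mul_sub_sin_le_sq (x : ℝ) : π * (x - sin x) ≤ x ^ 2 := by
  rcases lt_or_ge x 0 with hneg | hnonneg
  · nlinarith [le_sin hneg.le, pi_pos, sq_nonneg x]
  rcases le_or_gt x π with hle | hgt
  · nlinarith [mul_pi_sub_le_pi_mul_sin hnonneg hle]
  · have h := sin_le (sub_nonneg.2 hgt.le)
    rw [sin_sub_pi] at h
    nlinarith [sq_nonneg (x - π), pi_pos]

lemma eq_pi_div_two_of_pi_div_two_eq_div_sin {t : ℝ} (ht : t ∈ Ioo 0 π)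
    (h : π / 2 = t / sin t) : t = π / 2 := by
  have hsin := sin_pos_of_pos_of_lt_pi ht.1 ht.2
  rw [eq_div_iff hsin.ne'] at h
  rcases lt_trichotomy t (π / 2) with hlt | heq | hgt
  · have := mul_lt_sin ht.1 hlt
    rw [div_mul_eq_mul_div, div_lt_iff₀ pi_pos] at this
    linarith
  · exact heq
  · nlinarith [sin_le_one t, pi_pos]

lemma pi_sq_mul_two_mul_sub_sin_div_le {t : ℝ} (ht : sin t ≠ 0) :
    π ^ 2 * (2 * t - sin (2 * t)) / (1 - cos (2 * t)) ≤ 2 * π * (t / sin t) ^ 2 := by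
  have hcos : 1 - cos (2 * t) = 2 * sin t ^ 2 := by rw [cos_two_mul, cos_sq']; ring
  have hs : 0 < sin t ^ 2 := by positivity
  rw [hcos, div_pow, ← mul_div_assoc, div_le_div_iff₀ (by positivity) hs]
  nlinarith [mul_le_mul_of_nonneg_left (pi_mul_sub_sin_le_sq (2 * t)) (mul_nonneg pi_pos.le hs.le)]

end Real

theorem A_le_two_pi_sq (θ A : ℝ → ℝ)
    (hmem : ∀ ℓ ∈ Set.Ioi (1:ℝ), θ ℓ ∈ Set.Ioo 0 π)
    (heq : ∀ ℓ ∈ Set.Ioi (1:ℝ), ℓ = θ ℓ / Real.sin (θ ℓ))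
    (hA : ∀ ℓ ∈ Set.Ioi (1:ℝ),
      A ℓ = π ^ 2 * (2 * θ ℓ - Real.sin (2 * θ ℓ)) / (1 - Real.cos (2 * θ ℓ))) :
    (∀ ℓ ∈ Set.Ioi (1:ℝ), A ℓ ≤ 2 * π * ℓ ^ 2) ∧
    (∀ ℓ ∈ Set.Ioi (1:ℝ), A ℓ / ℓ ^ 2 ≤ A (π / 2) / (π / 2) ^ 2) ∧
    A (π / 2) / (π / 2) ^ 2 = 2 * π := by
  have hle : ∀ ℓ ∈ Ioi (1:ℝ), A ℓ ≤ 2 * π * ℓ ^ 2 := fun ℓ hℓ ↦ by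
    have hsin : sin (θ ℓ) ≠ 0 := (sin_pos_of_pos_of_lt_pi (hmem ℓ hℓ).1 (hmem ℓ hℓ).2).ne'
    calc A ℓ ≤ 2 * π * (θ ℓ / sin (θ ℓ)) ^ 2 := (hA ℓ hℓ).trans_le
            (pi_sq_mul_two_mul_sub_sin_div_le hsin)
      _ = 2 * π * ℓ ^ 2 := by rw [← heq ℓ hℓ]
  have hhalf : π / 2 ∈ Ioi (1:ℝ) := by rw [mem_Ioi, lt_div_iff₀ two_pos]; linarith [pi_gt_three]
  have hθ := eq_pi_div_two_of_pi_div_two_eq_div_sin (hmem _ hhalf) (heq _ hhalf)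
  have hmax : A (π / 2) / (π / 2) ^ 2 = 2 * π := by
    rw [hA _ hhalf, hθ, mul_div_cancel₀ π two_ne_zero, sin_pi, cos_pi]
    field_simp
    ring
  refine ⟨hle, fun ℓ hℓ ↦ ?_, hmax⟩
  rw [hmax, div_le_iff₀ (pow_pos (one_pos.trans hℓ) 2)]
  exact hle ℓ hℓ
end

section
/- Suppose E : (0,∞) × ℝ → ℝ is C², even in its second argument (E(ν,μ) = E(ν,−μ)), strictly jointly convex, and satisfies the growth condition E(ν,μ) ≥ K₀(νʳ + ν⁻ˢ + |μ|ᵖ) − K₀' with r > 2, s > 0, p > 1, K₀ > 0. Define E⋆(t,σ) := t E(1/t, σ/t). Then for every σ ∈ ℝ, E⋆₁(t,σ) → −∞ as t → 0⁺ and E⋆₁(t,σ) → +∞ as t → +∞. -/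
/-
For fixed `σ`, `t ↦ E⋆(t, σ)` is the perspective `t ↦ t F(t⁻¹ (1, σ))` of `F = uncurry E`. Its
second derivative is `t⁻³ D²F(t⁻¹ (1, σ)) (1, σ) (1, σ)`, positive by the Hessian condition, so it
is convex on `(0, ∞)`. For a differentiable convex `g`, secants bound the derivative:
`g'(t) ≤ (g(1) - g(t)) / (1 - t)` for `t < 1` and `g'(t) ≥ (g(t) - g(b)) / (t - b)` for `t > b`.
The growth condition gives `E⋆(t, σ) ≥ K₀ t^(1-r) - K₀' t → ∞` as `t → 0⁺` and
`E⋆(t, σ) / t ≥ K₀ t^s - K₀' → ∞` as `t → ∞`, and the secant bounds turn these into the limits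
of `E⋆₁`.
-/

open Real Set Filter Topology

/-- Partial derivative in the first variable. -/
noncomputable def D1 (f : ℝ → ℝ → ℝ) (ν μ : ℝ) : ℝ := deriv (fun x => f x μ) ν

/-- Partial derivative in the second variable. -/
noncomputable def D2 (f : ℝ → ℝ → ℝ) (ν μ : ℝ) : ℝ := deriv (fun y => f ν y) μ

/-- The transformed stored energy `E⋆(t,σ) = t E(1/t, σ/t)`. -/
noncomputable def Estar (E : ℝ → ℝ → ℝ) (t σ : ℝ) : ℝ := t * E (1 / t) (σ / t)

/-- Strict joint convexity expressed through positivity of the Hessian on `(0,∞) × ℝ`. -/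
def PosHess (E : ℝ → ℝ → ℝ) : Prop :=
  ∀ ν μ : ℝ, 0 < ν →
    0 < D1 (D1 E) ν μ ∧ 0 < D2 (D2 E) ν μ ∧
    0 < D1 (D1 E) ν μ * D2 (D2 E) ν μ - (D1 (D2 E) ν μ) ^ 2

open Function (uncurry)

theorem ContDiffAt.differentiableAt_fderiv {𝕜 X Y : Type*} [NontriviallyNormedField 𝕜]
    [NormedAddCommGroup X] [NormedSpace 𝕜 X] [NormedAddCommGroup Y] [NormedSpace 𝕜 Y]
    {f : X → Y} {x : X} (h : ContDiffAt 𝕜 2 f x) : DifferentiableAt 𝕜 (fderiv 𝕜 f) x :=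
  (h.fderiv_right (m := 1) le_rfl).differentiableAt one_ne_zero

theorem quadratic_form_pos_of_det_pos {A B C a b : ℝ} (hA : 0 < A) (hdet : 0 < A * C - B ^ 2)
    (hab : (a, b) ≠ 0) : 0 < A * a ^ 2 + 2 * B * a * b + C * b ^ 2 := by
  have hsum : 0 < (A * a + B * b) ^ 2 + (A * C - B ^ 2) * b ^ 2 := by
    rcases eq_or_ne b 0 with rfl | hb
    · have ha : a ≠ 0 := by simpa using hab
      simpa using (by positivity : 0 < (A * a) ^ 2)
    · exact add_pos_of_nonneg_of_pos (sq_nonneg _) (mul_pos hdet (by positivity))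
  refine pos_of_mul_pos_right (a := A) ?_ hA.le
  linarith [hsum]

section PartialDerivatives

variable {W : Type*} [NormedAddCommGroup W] [NormedSpace ℝ W] {ν μ : ℝ}

theorem DifferentiableAt.hasDerivAt_comp_prodMk_left {G : ℝ × ℝ → W}
    (h : DifferentiableAt ℝ G (ν, μ)) :
    HasDerivAt (fun x => G (x, μ)) (fderiv ℝ G (ν, μ) (1, 0)) ν :=
  h.hasFDerivAt.comp_hasDerivAt ν ((hasDerivAt_id ν).prodMk (hasDerivAt_const ν μ))

theorem DifferentiableAt.hasDerivAt_comp_prodMk_right {G : ℝ × ℝ → W}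
    (h : DifferentiableAt ℝ G (ν, μ)) :
    HasDerivAt (fun y => G (ν, y)) (fderiv ℝ G (ν, μ) (0, 1)) μ :=
  h.hasFDerivAt.comp_hasDerivAt μ ((hasDerivAt_const μ ν).prodMk (hasDerivAt_id μ))

variable {E : ℝ → ℝ → ℝ}

theorem D1_eq_fderiv (h : DifferentiableAt ℝ (uncurry E) (ν, μ)) :
    D1 E ν μ = fderiv ℝ (uncurry E) (ν, μ) (1, 0) :=
  h.hasDerivAt_comp_prodMk_left.deriv

theorem D2_eq_fderiv (h : DifferentiableAt ℝ (uncurry E) (ν, μ)) :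
    D2 E ν μ = fderiv ℝ (uncurry E) (ν, μ) (0, 1) :=
  h.hasDerivAt_comp_prodMk_right.deriv

theorem eventually_D1_D2_eq_fderiv (h : ContDiffAt ℝ 2 (uncurry E) (ν, μ)) :
    ∀ᶠ q in 𝓝 (ν, μ), D1 E q.1 q.2 = fderiv ℝ (uncurry E) q (1, 0) ∧
      D2 E q.1 q.2 = fderiv ℝ (uncurry E) q (0, 1) :=
  (h.eventually (by simp)).mono fun q hq =>
    have hd : DifferentiableAt ℝ (uncurry E) (q.1, q.2) := hq.differentiableAt (by norm_num)
    ⟨D1_eq_fderiv hd, D2_eq_fderiv hd⟩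

theorem hasDerivAt_fderiv_apply_comp_prodMk_left {G : ℝ × ℝ → W} (h : ContDiffAt ℝ 2 G (ν, μ))
    (w : ℝ × ℝ) :
    HasDerivAt (fun x => fderiv ℝ G (x, μ) w) (fderiv ℝ (fderiv ℝ G) (ν, μ) (1, 0) w) ν :=
  (ContinuousLinearMap.apply ℝ W w).hasFDerivAt.comp_hasDerivAt ν
    h.differentiableAt_fderiv.hasDerivAt_comp_prodMk_left

theorem hasDerivAt_fderiv_apply_comp_prodMk_right {G : ℝ × ℝ → W} (h : ContDiffAt ℝ 2 G (ν, μ))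
    (w : ℝ × ℝ) :
    HasDerivAt (fun y => fderiv ℝ G (ν, y) w) (fderiv ℝ (fderiv ℝ G) (ν, μ) (0, 1) w) μ :=
  (ContinuousLinearMap.apply ℝ W w).hasFDerivAt.comp_hasDerivAt μ
    h.differentiableAt_fderiv.hasDerivAt_comp_prodMk_right

theorem D1_D1_eq_fderiv_fderiv (h : ContDiffAt ℝ 2 (uncurry E) (ν, μ)) :
    D1 (D1 E) ν μ = fderiv ℝ (fderiv ℝ (uncurry E)) (ν, μ) (1, 0) (1, 0) := by
  have hslice : (fun x => D1 E x μ) =ᶠ[𝓝 ν] fun x => fderiv ℝ (uncurry E) (x, μ) (1, 0) :=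
    (((continuous_id.prodMk continuous_const).tendsto ν).eventually
      (eventually_D1_D2_eq_fderiv h)).mono fun _ hx => hx.1
  exact hslice.deriv_eq.trans (hasDerivAt_fderiv_apply_comp_prodMk_left h _).deriv

theorem D1_D2_eq_fderiv_fderiv (h : ContDiffAt ℝ 2 (uncurry E) (ν, μ)) :
    D1 (D2 E) ν μ = fderiv ℝ (fderiv ℝ (uncurry E)) (ν, μ) (1, 0) (0, 1) := by
  have hslice : (fun x => D2 E x μ) =ᶠ[𝓝 ν] fun x => fderiv ℝ (uncurry E) (x, μ) (0, 1) :=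
    (((continuous_id.prodMk continuous_const).tendsto ν).eventually
      (eventually_D1_D2_eq_fderiv h)).mono fun _ hx => hx.2
  exact hslice.deriv_eq.trans (hasDerivAt_fderiv_apply_comp_prodMk_left h _).deriv

theorem D2_D2_eq_fderiv_fderiv (h : ContDiffAt ℝ 2 (uncurry E) (ν, μ)) :
    D2 (D2 E) ν μ = fderiv ℝ (fderiv ℝ (uncurry E)) (ν, μ) (0, 1) (0, 1) := by
  have hslice : (fun y => D2 E ν y) =ᶠ[𝓝 μ] fun y => fderiv ℝ (uncurry E) (ν, y) (0, 1) :=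
    (((continuous_const.prodMk continuous_id).tendsto μ).eventually
      (eventually_D1_D2_eq_fderiv h)).mono fun _ hy => hy.2
  exact hslice.deriv_eq.trans (hasDerivAt_fderiv_apply_comp_prodMk_right h _).deriv

theorem fderiv_fderiv_uncurry_apply_self (h : ContDiffAt ℝ 2 (uncurry E) (ν, μ)) (v : ℝ × ℝ) :
    fderiv ℝ (fderiv ℝ (uncurry E)) (ν, μ) v v =
      D1 (D1 E) ν μ * v.1 ^ 2 + 2 * D1 (D2 E) ν μ * v.1 * v.2 + D2 (D2 E) ν μ * v.2 ^ 2 := by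
  have hsymm := (h.isSymmSndFDerivAt (by simp)).eq ((0 : ℝ), (1 : ℝ)) ((1 : ℝ), (0 : ℝ))
  have hv : v = v.1 • ((1 : ℝ), (0 : ℝ)) + v.2 • ((0 : ℝ), (1 : ℝ)) := by simp
  rw [D1_D1_eq_fderiv_fderiv h, D1_D2_eq_fderiv_fderiv h, D2_D2_eq_fderiv_fderiv h]
  conv_lhs => rw [hv]
  simp only [map_add, map_smul, add_apply, smul_apply, smul_eq_mul, hsymm]
  ring

theorem PosHess.fderiv_fderiv_uncurry_apply_self_pos (hconv : PosHess E) (hν : 0 < ν)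
    (h : ContDiffAt ℝ 2 (uncurry E) (ν, μ)) {v : ℝ × ℝ} (hv : v ≠ 0) :
    0 < fderiv ℝ (fderiv ℝ (uncurry E)) (ν, μ) v v := by
  obtain ⟨hA, -, hdet⟩ := hconv ν μ hν
  rw [fderiv_fderiv_uncurry_apply_self h]
  exact quadratic_form_pos_of_det_pos hA hdet hv

end PartialDerivatives

section Perspective

variable {V : Type*} [NormedAddCommGroup V] [NormedSpace ℝ V] {F : V → ℝ} {x : V} {t : ℝ}

noncomputable def perspective (F : V → ℝ) (x : V) (t : ℝ) : ℝ := t * F (t⁻¹ • x)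

theorem hasDerivAt_inv_smul (x : V) (ht : t ≠ 0) :
    HasDerivAt (fun s : ℝ => s⁻¹ • x) (-(t ^ 2)⁻¹ • x) t :=
  (hasDerivAt_inv ht).smul_const x

theorem hasDerivAt_perspective (ht : t ≠ 0) (hF : DifferentiableAt ℝ F (t⁻¹ • x)) :
    HasDerivAt (perspective F x) (F (t⁻¹ • x) - t⁻¹ * fderiv ℝ F (t⁻¹ • x) x) t := by
  have hcomp := hF.hasFDerivAt.comp_hasDerivAt t (hasDerivAt_inv_smul x ht)
  refine ((hasDerivAt_id' t).mul hcomp).congr_deriv ?_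
  simp only [Function.comp_apply, map_smul, smul_eq_mul]
  field_simp
  ring

theorem hasDerivAt_perspective_deriv (ht : t ≠ 0) (hF : DifferentiableAt ℝ F (t⁻¹ • x))
    (hF' : DifferentiableAt ℝ (fderiv ℝ F) (t⁻¹ • x)) :
    HasDerivAt (fun s => F (s⁻¹ • x) - s⁻¹ * fderiv ℝ F (s⁻¹ • x) x)
      (t⁻¹ ^ 3 * fderiv ℝ (fderiv ℝ F) (t⁻¹ • x) x x) t := by
  have hval : HasDerivAt (fun s : ℝ => F (s⁻¹ • x)) (fderiv ℝ F (t⁻¹ • x) (-(t ^ 2)⁻¹ • x)) t :=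
    hF.hasFDerivAt.comp_hasDerivAt t (hasDerivAt_inv_smul x ht)
  have hlin : HasDerivAt (fun s : ℝ => fderiv ℝ F (s⁻¹ • x) x)
      (fderiv ℝ (fderiv ℝ F) (t⁻¹ • x) (-(t ^ 2)⁻¹ • x) x) t :=
    (ContinuousLinearMap.apply ℝ ℝ x).hasFDerivAt.comp_hasDerivAt t
      (hF'.hasFDerivAt.comp_hasDerivAt t (hasDerivAt_inv_smul x ht))
  refine (hval.sub ((hasDerivAt_inv ht).mul hlin)).congr_deriv ?_
  simp only [map_smul, smul_apply, smul_eq_mul]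
  field_simp
  ring

theorem convexOn_perspective (hF : ∀ t ∈ Ioi (0 : ℝ), ContDiffAt ℝ 2 F (t⁻¹ • x))
    (hF₂ : ∀ t ∈ Ioi (0 : ℝ), 0 ≤ fderiv ℝ (fderiv ℝ F) (t⁻¹ • x) x x) :
    ConvexOn ℝ (Ioi 0) (perspective F x) := by
  have hd : ∀ t ∈ Ioi (0 : ℝ), DifferentiableAt ℝ F (t⁻¹ • x) :=
    fun t ht => (hF t ht).differentiableAt (by norm_num)
  have h₁ := fun t (ht : t ∈ Ioi (0 : ℝ)) => hasDerivAt_perspective (ne_of_gt ht) (hd t ht)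
  have h₂ := fun t (ht : t ∈ Ioi (0 : ℝ)) =>
    hasDerivAt_perspective_deriv (ne_of_gt ht) (hd t ht) (hF t ht).differentiableAt_fderiv
  refine convexOn_of_hasDerivWithinAt2_nonneg (convex_Ioi 0)
    (f' := fun s => F (s⁻¹ • x) - s⁻¹ * fderiv ℝ F (s⁻¹ • x) x)
    (f'' := fun s => s⁻¹ ^ 3 * fderiv ℝ (fderiv ℝ F) (s⁻¹ • x) x x)
    (fun t ht => (h₁ t ht).continuousAt.continuousWithinAt) ?_ ?_ ?_ <;> rw [interior_Ioi]
  · exact fun t ht => (h₁ t ht).hasDerivWithinAt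
  · exact fun t ht => (h₂ t ht).hasDerivWithinAt
  · exact fun t ht => mul_nonneg (pow_nonneg (inv_nonneg.mpr (le_of_lt ht)) 3) (hF₂ t ht)

end Perspective

namespace ConvexOn

variable {g : ℝ → ℝ} {a : ℝ}

theorem tendsto_deriv_nhdsGT_atBot (hg : ConvexOn ℝ (Ioi a) g)
    (hd : ∀ t ∈ Ioi a, DifferentiableAt ℝ g t) (hlim : Tendsto g (𝓝[>] a) atTop) :
    Tendsto (deriv g) (𝓝[>] a) atBot := by
  have hb : a + 1 ∈ Ioi a := by simp
  refine tendsto_atBot_mono' _ ?_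
    (tendsto_atBot_add_const_left _ (g (a + 1)) (tendsto_neg_atTop_atBot.comp hlim))
  filter_upwards [Ioo_mem_nhdsGT (lt_add_one a), hlim.eventually_ge_atTop (g (a + 1))]
    with t ht hge
  calc deriv g t ≤ slope g t (a + 1) := hg.deriv_le_slope ht.1 hb ht.2 (hd t ht.1)
    _ = (g (a + 1) - g t) / (a + 1 - t) := slope_def_field g t (a + 1)
    _ ≤ g (a + 1) + -g t := by
      rw [div_le_iff₀ (by linarith [ht.2])]
      nlinarith [ht.1]

theorem tendsto_deriv_atTop_atTop (hg : ConvexOn ℝ (Ioi a) g)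
    (hd : ∀ t ∈ Ioi a, DifferentiableAt ℝ g t) (hlim : Tendsto (fun t => g t / t) atTop atTop) :
    Tendsto (deriv g) atTop atTop := by
  obtain ⟨b, hab, hb⟩ : ∃ b, a < b ∧ 0 < b := ⟨max a 0 + 1, by grind, by positivity⟩
  have hsecant : Tendsto (fun t => (g t - g b) / t) atTop atTop := by
    exact (hlim.atTop_add (tendsto_const_nhds (x := g b).div_atTop tendsto_id).neg).congr
      fun t => by simp only [id]; ring
  refine tendsto_atTop_mono' _ ?_ hsecant
  filter_upwards [hsecant.eventually_ge_atTop 0, eventually_gt_atTop b] with t hnonneg hbt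
  have ht : 0 < t := hb.trans hbt
  rw [le_div_iff₀ ht, zero_mul] at hnonneg
  calc (g t - g b) / t ≤ (g t - g b) / (t - b) :=
        div_le_div_of_nonneg_left hnonneg (by linarith) (by linarith)
    _ = slope g b t := (slope_def_field g b t).symm
    _ ≤ deriv g t := hg.slope_le_deriv hab (hab.trans hbt) hbt (hd t (hab.trans hbt))

end ConvexOn

section Growth

variable {E : ℝ → ℝ → ℝ} {K₀ K₀' : ℝ}

theorem tendsto_Estar_nhdsGT_zero {r : ℝ} (hK₀ : 0 < K₀) (hr : 1 < r)
    (hgrow : ∀ ν μ : ℝ, 0 < ν → K₀ * ν ^ r - K₀' ≤ E ν μ) (σ : ℝ) :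
    Tendsto (fun t => Estar E t σ) (𝓝[>] 0) atTop := by
  have hlower : Tendsto (fun t : ℝ => K₀ * t ^ (1 - r) + -(K₀' * t)) (𝓝[>] 0) atTop := by
    have hvanish : Tendsto (fun t : ℝ => -(K₀' * t)) (𝓝[>] 0) (𝓝 0) :=
      ((continuous_const_mul K₀').neg.tendsto' 0 0 (by simp)).mono_left nhdsWithin_le_nhds
    exact ((tendsto_rpow_neg_nhdsGT_zero (by linarith)).const_mul_atTop hK₀).atTop_add hvanish
  refine tendsto_atTop_mono' _ ?_ hlower
  filter_upwards [self_mem_nhdsWithin] with t (ht : 0 < t)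
  have hpow : t * (1 / t) ^ r = t ^ (1 - r) := by
    rw [one_div, inv_rpow ht.le, ← rpow_neg ht.le, sub_eq_add_neg, rpow_add ht, rpow_one]
  calc K₀ * t ^ (1 - r) + -(K₀' * t) = t * (K₀ * (1 / t) ^ r - K₀') := by rw [← hpow]; ring
    _ ≤ Estar E t σ := mul_le_mul_of_nonneg_left (hgrow _ _ (by positivity)) ht.le

theorem tendsto_Estar_div_atTop {s : ℝ} (hK₀ : 0 < K₀) (hs : 0 < s)
    (hgrow : ∀ ν μ : ℝ, 0 < ν → K₀ * ν ^ (-s) - K₀' ≤ E ν μ) (σ : ℝ) :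
    Tendsto (fun t => Estar E t σ / t) atTop atTop := by
  refine tendsto_atTop_mono' _ ?_
    (tendsto_atTop_add_const_right _ (-K₀') ((tendsto_rpow_atTop hs).const_mul_atTop hK₀))
  filter_upwards [eventually_gt_atTop 0] with t ht
  have hpow : (1 / t) ^ (-s) = t ^ s := by
    rw [one_div, inv_rpow ht.le, rpow_neg ht.le, inv_inv]
  calc K₀ * t ^ s + -K₀' = K₀ * (1 / t) ^ (-s) - K₀' := by rw [hpow]; ring
    _ ≤ E (1 / t) (σ / t) := hgrow _ _ (by positivity)
    _ = Estar E t σ / t := by rw [Estar, mul_div_cancel_left₀ _ ht.ne']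

end Growth

theorem Estar_eq_perspective (E : ℝ → ℝ → ℝ) (t σ : ℝ) :
    Estar E t σ = perspective (uncurry E) (1, σ) t := by
  simp [Estar, perspective, div_eq_inv_mul]

theorem Estar1_limits_general (E : ℝ → ℝ → ℝ) (K₀ K₀' r s p : ℝ)
    (hE : ContDiffOn ℝ 2 (fun q : ℝ × ℝ => E q.1 q.2) (Set.Ioi 0 ×ˢ Set.univ))
    (hconv : PosHess E)
    (hK₀ : 0 < K₀) (hr : 2 < r) (hs : 0 < s)
    (hgrow : ∀ ν μ : ℝ, 0 < ν →
      K₀ * (ν ^ r + ν ^ (-s) + |μ| ^ p) - K₀' ≤ E ν μ) :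
    ∀ σ : ℝ,
      Filter.Tendsto (fun t => D1 (Estar E) t σ) (nhdsWithin 0 (Set.Ioi 0)) Filter.atBot ∧
      Filter.Tendsto (fun t => D1 (Estar E) t σ) Filter.atTop Filter.atTop := by
  intro σ
  have hsmooth : ∀ t ∈ Ioi (0 : ℝ), ContDiffAt ℝ 2 (uncurry E) (t⁻¹ • (1, σ)) := fun t ht =>
    hE.contDiffAt ((isOpen_Ioi.prod isOpen_univ).mem_nhds ⟨by simpa using ht, trivial⟩)
  have hstar : (fun t => Estar E t σ) = perspective (uncurry E) (1, σ) :=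
    funext fun t => Estar_eq_perspective E t σ
  have hconvex : ConvexOn ℝ (Ioi 0) (fun t => Estar E t σ) := hstar ▸ convexOn_perspective hsmooth
    fun t ht => (hconv.fderiv_fderiv_uncurry_apply_self_pos (by simpa using ht) (hsmooth t ht)
      (by simp)).le
  have hdiff : ∀ t ∈ Ioi (0 : ℝ), DifferentiableAt ℝ (fun t => Estar E t σ) t := fun t ht =>
    hstar ▸ (hasDerivAt_perspective (ne_of_gt ht)
      ((hsmooth t ht).differentiableAt (by norm_num))).differentiableAt
  have hgrow_r : ∀ ν μ : ℝ, 0 < ν → K₀ * ν ^ r - K₀' ≤ E ν μ := fun ν μ hν => by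
    nlinarith [hgrow ν μ hν, rpow_nonneg hν.le (-s), rpow_nonneg (abs_nonneg μ) p]
  have hgrow_s : ∀ ν μ : ℝ, 0 < ν → K₀ * ν ^ (-s) - K₀' ≤ E ν μ := fun ν μ hν => by
    nlinarith [hgrow ν μ hν, rpow_nonneg hν.le r, rpow_nonneg (abs_nonneg μ) p]
  exact ⟨hconvex.tendsto_deriv_nhdsGT_atBot hdiff
      (tendsto_Estar_nhdsGT_zero hK₀ (by linarith) hgrow_r σ),
    hconvex.tendsto_deriv_atTop_atTop hdiff (tendsto_Estar_div_atTop hK₀ hs hgrow_s σ)⟩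

theorem Estar1_limits (E : ℝ → ℝ → ℝ) (K₀ K₀' r s p : ℝ)
    (hE : ContDiffOn ℝ 2 (fun q : ℝ × ℝ => E q.1 q.2) (Set.Ioi 0 ×ˢ Set.univ))
    (heven : ∀ ν μ : ℝ, 0 < ν → E ν μ = E ν (-μ))
    (hconv : PosHess E)
    (hK₀ : 0 < K₀) (hr : 2 < r) (hs : 0 < s) (hp : 1 < p)
    (hgrow : ∀ ν μ : ℝ, 0 < ν →
      K₀ * (ν ^ r + ν ^ (-s) + |μ| ^ p) - K₀' ≤ E ν μ) :
    ∀ σ : ℝ,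
      Filter.Tendsto (fun t => D1 (Estar E) t σ) (nhdsWithin 0 (Set.Ioi 0)) Filter.atBot ∧
      Filter.Tendsto (fun t => D1 (Estar E) t σ) Filter.atTop Filter.atTop :=
  Estar1_limits_general E K₀ K₀' r s p hE hconv hK₀ hr hs hgrow
end
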